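/- Let G be a connected claw-free cubic multigraph different from K4, with k diamonds and p digons, where k is odd. Then no 2-bisection of G has exactly (|V(G)| - k - 2p)/3 monochromatic edges, since |V(G)| is even and (|V(G)| - k - 2p)/3 would be odd while the number of monochromatic edges of any 2-bisection is even. -/

import Mathlib

/-- A multigraph on vertex set `V`: a symmetric edge-multiplicity function with no loops. -/
structure Multigraph (V : Type*) where
  mult : V → V → ℕ
  symm : ∀ u v, mult u v = mult v u
  loopless : ∀ v, mult v v = 0

namespace Multigraph

variable {V : Type*}

/-- Adjacency: distinct vertices joined by at least one edge. -/
def Adj (G : Multigraph V) (u v : V) : Prop := u ≠ v ∧ 0 < G.mult u v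

/-- The underlying simple graph. -/
def toSimple (G : Multigraph V) : SimpleGraph V where
  Adj u v := u ≠ v ∧ 0 < G.mult u v
  symm := ⟨fun u v h => ⟨h.1.symm, by rw [G.symm v u]; exact h.2⟩⟩
  loopless := ⟨fun v h => h.1 rfl⟩

def Connected (G : Multigraph V) : Prop := G.toSimple.Connected

section Fin
variable [Fintype V] [DecidableEq V]

/-- The degree of a vertex, counting edge multiplicities. -/
def degree (G : Multigraph V) (v : V) : ℕ := ∑ u, G.mult v u

def IsCubic (G : Multigraph V) : Prop := ∀ v, G.degree v = 3

end Fin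

variable [DecidableEq V]

/-- No induced claw `K_{1,3}` (centre `c`, leaves `a b d`). -/
def IsClawFree (G : Multigraph V) : Prop :=
  ¬ ∃ c a b d : V, c ≠ a ∧ c ≠ b ∧ c ≠ d ∧ a ≠ b ∧ a ≠ d ∧ b ≠ d ∧
      G.mult c a = 1 ∧ G.mult c b = 1 ∧ G.mult c d = 1 ∧
      G.mult a b = 0 ∧ G.mult a d = 0 ∧ G.mult b d = 0

/-- An induced triangle (cycle of length three, all sides simple edges). -/
def IsTriangle (G : Multigraph V) (a b c : V) : Prop :=
  a ≠ b ∧ a ≠ c ∧ b ≠ c ∧ G.mult a b = 1 ∧ G.mult a c = 1 ∧ G.mult b c = 1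

/-- A trumpet: a triangle whose side `ab` is a multiple edge. -/
def IsTrumpet (G : Multigraph V) (a b c : V) : Prop :=
  a ≠ b ∧ a ≠ c ∧ b ≠ c ∧ G.mult a b = 2 ∧ G.mult a c = 1 ∧ G.mult b c = 1

/-- A digon: two vertices joined by parallel edges. -/
def IsDigon (G : Multigraph V) (u v : V) : Prop := u ≠ v ∧ 2 ≤ G.mult u v

/-- A diamond: an induced `K₄` minus the edge `ad`. -/
def IsDiamond (G : Multigraph V) (a b c d : V) : Prop :=
  a ≠ b ∧ a ≠ c ∧ a ≠ d ∧ b ≠ c ∧ b ≠ d ∧ c ≠ d ∧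
  G.mult a d = 0 ∧ G.mult a b = 1 ∧ G.mult a c = 1 ∧ G.mult b c = 1 ∧
  G.mult b d = 1 ∧ G.mult c d = 1

/-- The vertex sets of the diamonds of `G`. -/
def diamondSets (G : Multigraph V) : Set (Finset V) :=
  {s | ∃ a b c d, s = {a, b, c, d} ∧ G.IsDiamond a b c d}

/-- The number of diamonds of `G`. -/
noncomputable def diamondCount (G : Multigraph V) : ℕ := G.diamondSets.ncard

/-- The vertex sets of the digons of `G` that are not the multiple side of a trumpet. -/
def digonSets (G : Multigraph V) : Set (Finset V) :=
  {s | ∃ u v, s = {u, v} ∧ G.IsDigon u v ∧ ∀ w, ¬ G.IsTrumpet u v w}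

/-- The number of digons of `G` (not counting those inside trumpets). -/
noncomputable def digonCount (G : Multigraph V) : ℕ := G.digonSets.ncard

/-- `G` is (isomorphic to) the simple complete graph `K₄`. -/
def IsK4 (G : Multigraph V) : Prop :=
  Nonempty (G.toSimple ≃g (⊤ : SimpleGraph (Fin 4))) ∧ ∀ u v, G.mult u v ≤ 1

section Bisection
variable [Fintype V]

/-- A bisection: the two parts `B` and `Bᶜ` have the same size. -/
def IsBisection (G : Multigraph V) (B : Finset V) : Prop := B.card = Bᶜ.card

/-- The number of monochromatic edges inside the part `B` (with multiplicity). -/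
def monoEdges (G : Multigraph V) (B : Finset V) : ℕ :=
  (∑ u ∈ B, ∑ v ∈ B, G.mult u v) / 2

/-- The total number of monochromatic edges of the bisection `(B, Bᶜ)`. -/
def epsilon (G : Multigraph V) (B : Finset V) : ℕ := G.monoEdges B + G.monoEdges Bᶜ

/-- The simple graph induced by `G` on the part `B`. -/
def inducedSimple (G : Multigraph V) (B : Finset V) : SimpleGraph V where
  Adj u v := u ≠ v ∧ u ∈ B ∧ v ∈ B ∧ 0 < G.mult u v
  symm := ⟨fun u v h => ⟨h.1.symm, h.2.2.1, h.2.1, by rw [G.symm v u]; exact h.2.2.2⟩⟩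
  loopless := ⟨fun v h => h.1 rfl⟩

/-- Every monochromatic component inside `B` has at most `k` vertices. -/
def SmallComponents (G : Multigraph V) (B : Finset V) (k : ℕ) : Prop :=
  ∀ v ∈ B, {u | (G.inducedSimple B).Reachable v u}.ncard ≤ k

/-- A `k`-bisection. -/
def IsKBisection (G : Multigraph V) (B : Finset V) (k : ℕ) : Prop :=
  G.IsBisection B ∧ G.SmallComponents B k ∧ G.SmallComponents Bᶜ k

/-- A desired bisection: (DB1) exactly one monochromatic edge per triangle, (DB2) every
monochromatic edge lies in a triangle, (DB3) exactly one monochromatic edge per diamond,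
(DB4) no multiple edge is monochromatic. -/
def IsDesired (G : Multigraph V) (B : Finset V) : Prop :=
  G.IsBisection B ∧
  (∀ a b c, G.IsTriangle a b c →
    (({(a, b), (a, c), (b, c)} : Finset (V × V)).filter
      (fun e => e.1 ∈ B ↔ e.2 ∈ B)).card = 1) ∧
  (∀ u v, G.Adj u v → (u ∈ B ↔ v ∈ B) → ∃ w, G.IsTriangle u v w) ∧
  (∀ a b c d, G.IsDiamond a b c d →
    (({(a, b), (a, c), (b, c), (b, d), (c, d)} : Finset (V × V)).filter
      (fun e => e.1 ∈ B ↔ e.2 ∈ B)).card = 1) ∧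
  (∀ u v, 2 ≤ G.mult u v → ¬ (u ∈ B ↔ v ∈ B))

end Bisection

end Multigraph

namespace Multigraph

variable {V : Type*} [DecidableEq V]

/-- Delete all edges between `x` and `y`. -/
def deleteEdge (G : Multigraph V) (x y : V) : Multigraph V where
  mult u v := if (u = x ∧ v = y) ∨ (u = y ∧ v = x) then 0 else G.mult u v
  symm := by
    intro u v
    have hsy := G.symm u v
    by_cases h : (u = x ∧ v = y) ∨ (u = y ∧ v = x)
    · have h' : (v = x ∧ u = y) ∨ (v = y ∧ u = x) := by tauto
      simp [h, h']
    · have h' : ¬ ((v = x ∧ u = y) ∨ (v = y ∧ u = x)) := by tauto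
      simp [h, h', hsy]
  loopless := by
    intro v
    by_cases h : (v = x ∧ v = y) ∨ (v = y ∧ v = x) <;> simp [h, G.loopless]

/-- The diamond reduction: delete the diamond vertices `a b c d` and add one new edge
between the outside neighbours `x` and `y`. -/
def diamondReduce (G : Multigraph V) (a b c d x y : V) :
    Multigraph {v : V // v ∉ ({a, b, c, d} : Finset V)} where
  mult u v := if u.1 ≠ v.1 ∧ ((u.1 = x ∧ v.1 = y) ∨ (u.1 = y ∧ v.1 = x))
    then G.mult u.1 v.1 + 1 else G.mult u.1 v.1
  symm := by
    intro u v
    have hsy := G.symm u.1 v.1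
    by_cases h : u.1 ≠ v.1 ∧ ((u.1 = x ∧ v.1 = y) ∨ (u.1 = y ∧ v.1 = x))
    · have h' : v.1 ≠ u.1 ∧ ((v.1 = x ∧ u.1 = y) ∨ (v.1 = y ∧ u.1 = x)) := by tauto
      simp [h, h', hsy]
    · have h' : ¬ (v.1 ≠ u.1 ∧ ((v.1 = x ∧ u.1 = y) ∨ (v.1 = y ∧ u.1 = x))) := by tauto
      simp [h, h', hsy]
  loopless := by
    intro v
    simp [G.loopless]

/-- A ring of two diamonds: two vertex-disjoint diamonds covering all of `V`, joined
cyclically by two edges between their degree-2 vertices. -/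
def IsRingOfTwoDiamonds (G : Multigraph V) : Prop :=
  ∃ a₁ b₁ c₁ d₁ a₂ b₂ c₂ d₂ : V,
    ([a₁, b₁, c₁, d₁, a₂, b₂, c₂, d₂] : List V).Nodup ∧
    (∀ v : V, v ∈ [a₁, b₁, c₁, d₁, a₂, b₂, c₂, d₂]) ∧
    G.IsDiamond a₁ b₁ c₁ d₁ ∧ G.IsDiamond a₂ b₂ c₂ d₂ ∧
    G.mult d₁ a₂ = 1 ∧ G.mult d₂ a₁ = 1

end Multigraph

namespace Multigraph

variable {V : Type*} [DecidableEq V] (G : Multigraph V)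

/-- Handshake parity on a vertex set: every edge inside `s` is counted twice. -/
theorem even_sum_sum_mult (s : Finset V) : Even (∑ u ∈ s, ∑ v ∈ s, G.mult u v) := by
  induction s using Finset.induction_on with
  | empty => simp
  | @insert a s ha ih =>
    have hcol : ∑ u ∈ s, G.mult u a = ∑ v ∈ s, G.mult a v :=
      Finset.sum_congr rfl fun u _ => G.symm u a
    simp only [Finset.sum_insert ha, G.loopless, Finset.sum_add_distrib, hcol]
    obtain ⟨m, hm⟩ := ih
    exact ⟨∑ v ∈ s, G.mult a v + m, by omega⟩

variable [Fintype V] {G}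

theorem IsCubic.three_mul_card (hG : G.IsCubic) (s : Finset V) :
    3 * s.card = ∑ u ∈ s, ∑ v ∈ s, G.mult u v + ∑ u ∈ s, ∑ v ∈ sᶜ, G.mult u v := by
  calc 3 * s.card = ∑ u ∈ s, G.degree u := by simp [hG _, mul_comm]
    _ = ∑ u ∈ s, (∑ v ∈ s, G.mult u v + ∑ v ∈ sᶜ, G.mult u v) :=
      Finset.sum_congr rfl fun u _ => (Finset.sum_add_sum_compl s _).symm
    _ = _ := Finset.sum_add_distrib

theorem IsCubic.even_card (hG : G.IsCubic) : Even (Fintype.card V) := by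
  have h := hG.three_mul_card Finset.univ
  simp only [Finset.card_univ, Finset.compl_univ, Finset.sum_empty, Finset.sum_const_zero,
    add_zero] at h
  have h3 : Even (3 * Fintype.card V) := h ▸ G.even_sum_sum_mult Finset.univ
  exact (Nat.even_mul.mp h3).resolve_left (by decide)

/-- Both sides of a bisection of a cubic graph send the same number of edge ends across the
cut, hence contain the same number of edges. -/
theorem IsCubic.sum_sum_mult_compl_of_isBisection (hG : G.IsCubic) {B : Finset V}
    (hB : G.IsBisection B) :
    ∑ u ∈ Bᶜ, ∑ v ∈ Bᶜ, G.mult u v = ∑ u ∈ B, ∑ v ∈ B, G.mult u v := by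
  have hcut : ∑ u ∈ Bᶜ, ∑ v ∈ B, G.mult u v = ∑ u ∈ B, ∑ v ∈ Bᶜ, G.mult u v := by
    rw [Finset.sum_comm]
    exact Finset.sum_congr rfl fun u _ => Finset.sum_congr rfl fun v _ => G.symm v u
  have hin := hG.three_mul_card B
  have hout := hG.three_mul_card Bᶜ
  rw [compl_compl, hcut, ← hB] at hout
  omega

theorem IsCubic.even_epsilon (hG : G.IsCubic) {B : Finset V} (hB : G.IsBisection B) :
    Even (G.epsilon B) := by
  rw [epsilon, monoEdges, monoEdges, hG.sum_sum_mult_compl_of_isBisection hB]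
  exact ⟨_, rfl⟩

end Multigraph

theorem stmt19_general {V : Type*} [Fintype V] [DecidableEq V] (G : Multigraph V)
    (hcubic : G.IsCubic) (hodd : Odd G.diamondCount) :
    ¬ ∃ B : Finset V, G.IsKBisection B 2 ∧
      3 * G.epsilon B + G.diamondCount + 2 * G.digonCount = Fintype.card V := by
  rintro ⟨B, ⟨hbis, -, -⟩, hcount⟩
  obtain ⟨e, he⟩ := hcubic.even_epsilon hbis
  obtain ⟨n, hn⟩ := hcubic.even_card
  obtain ⟨k, hk⟩ := hodd
  omega

/-- If the number `k` of diamonds is odd, no 2-bisection has exactly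
`(|V| - k - 2p)/3` monochromatic edges. -/
theorem stmt19 {V : Type*} [Fintype V] [DecidableEq V] (G : Multigraph V)
    (hconn : G.Connected) (hclaw : G.IsClawFree) (hcubic : G.IsCubic)
    (hK4 : ¬ G.IsK4) (hodd : Odd G.diamondCount) :
    ¬ ∃ B : Finset V, G.IsKBisection B 2 ∧
      3 * G.epsilon B + G.diamondCount + 2 * G.digonCount = Fintype.card V :=
  stmt19_general G hcubic hodd
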